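/- arXiv:2112.00388 — 11 statements merged into one kernel-verified Lean document; each statement's English description precedes it below -/
import Mathlib

section
/- Let A be a type and k : ℕ. For each j : Fin k with j ≠ 0, let φ_j : A ≃ A be a bijection, and let τ_j be the permutation of Fin k × A defined by τ_j (0, a) = (j, φ_j a), τ_j (j, a) = (0, φ_j⁻¹ a), and τ_j (i, a) = (i, a) for i ∉ {0, j}. If g lies in the subgroup of Equiv.Perm (Fin k × A) generated by {τ_j | j ≠ 0} and g fixes every fiber setwise (that is, the first coordinate of g (i, a) equals i for all i : Fin k and a : A), then g is the identity permutation. -/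
/-!
After the change of coordinates `(i, a) ↦ (i, c i a)` on `Fin k × A`, with `c 0 = id` and
`c j = φ j` otherwise, every `τ j` becomes the transposition of the fibers `0` and `j` acting
trivially on the second coordinate. So every `g` in the generated subgroup becomes a
permutation that only moves first coordinates; if `g` also preserves first coordinates, it is
the identity.
-/

namespace Equiv.Perm

variable {α β : Type*}

def preserving (f : α → β) : Subgroup (Perm α) where
  carrier := {g | ∀ x, f (g x) = f x}
  one_mem' _ := rfl
  mul_mem' hg hh x := (hg _).trans (hh x)
  inv_mem' {g} hg x := by simpa using (hg (g⁻¹ x)).symm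

theorem eq_one_of_mem_preserving_fst_of_mem_preserving_snd {g : Perm (α × β)}
    (h₁ : g ∈ preserving Prod.fst) (h₂ : g ∈ preserving Prod.snd) : g = 1 :=
  Equiv.ext fun x => Prod.ext (h₁ x) (h₂ x)

theorem prodCongrRight_mem_preserving_fst (c : α → Perm β) :
    (Equiv.prodCongrRight c : Perm (α × β)) ∈ preserving Prod.fst :=
  fun _ => rfl

end Equiv.Perm

open Equiv Equiv.Perm

theorem conj_prodCongrRight_mem_preserving_snd {A : Type*} {k : ℕ} [NeZero k]
    (φ : Fin k → (A ≃ A)) (τ : Fin k → Perm (Fin k × A))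
    (hτ0 : ∀ j : Fin k, j ≠ 0 → ∀ a : A, τ j (0, a) = (j, φ j a))
    (hτj : ∀ j : Fin k, j ≠ 0 → ∀ a : A, τ j (j, a) = (0, (φ j).symm a))
    (hτi : ∀ j : Fin k, j ≠ 0 → ∀ i : Fin k, i ≠ 0 → i ≠ j → ∀ a : A, τ j (i, a) = (i, a))
    {j : Fin k} (hj : j ≠ 0) :
    (prodCongrRight (Function.update φ 0 (Equiv.refl A)))⁻¹ * τ j *
      prodCongrRight (Function.update φ 0 (Equiv.refl A)) ∈ preserving Prod.snd := by
  rintro ⟨i, a⟩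
  rcases eq_or_ne i 0 with rfl | hi0
  · simp [hτ0 j hj, hj]
  rcases eq_or_ne i j with rfl | hij
  · simp [hτj i hj, hj]
  · simp [hi0, hτi j hj i hi0 hij]

/-- If `g` is in the subgroup generated by the fiber-swapping involutions `τ_j` and `g`
fixes every fiber of `Fin k × A` setwise, then `g = 1`. -/
theorem stmt1 {A : Type*} {k : ℕ} [NeZero k]
    (φ : Fin k → (A ≃ A))
    (τ : Fin k → Equiv.Perm (Fin k × A))
    (hτ0 : ∀ j : Fin k, j ≠ 0 → ∀ a : A, τ j (0, a) = (j, φ j a))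
    (hτj : ∀ j : Fin k, j ≠ 0 → ∀ a : A, τ j (j, a) = (0, (φ j).symm a))
    (hτi : ∀ j : Fin k, j ≠ 0 → ∀ i : Fin k, i ≠ 0 → i ≠ j → ∀ a : A, τ j (i, a) = (i, a))
    (g : Equiv.Perm (Fin k × A))
    (hg : g ∈ Subgroup.closure {x : Equiv.Perm (Fin k × A) | ∃ j : Fin k, j ≠ 0 ∧ x = τ j})
    (hfix : ∀ (i : Fin k) (a : A), (g (i, a)).1 = i) :
    g = 1 := by
  set F : Perm (Fin k × A) := prodCongrRight (Function.update φ 0 (Equiv.refl A))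
  have hsnd : F⁻¹ * g * F ∈ preserving Prod.snd := by
    refine (Subgroup.closure_le ((preserving Prod.snd).comap (MulAut.conj F⁻¹).toMonoidHom)).2
      ?_ hg
    rintro _ ⟨j, hj, rfl⟩
    simpa [mul_assoc] using conj_prodCongrRight_mem_preserving_snd φ τ hτ0 hτj hτi hj
  have hF : F ∈ preserving Prod.fst := prodCongrRight_mem_preserving_fst _
  have hfst : F⁻¹ * g * F ∈ preserving Prod.fst :=
    mul_mem (mul_mem (inv_mem hF) fun x => hfix x.1 x.2) hF
  have h := eq_one_of_mem_preserving_fst_of_mem_preserving_snd hfst hsnd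
  exact (conj_eq_one_iff (a := F⁻¹)).mp (by simpa using h)
end

section
/- Suppose C has full support. If σ is a permutation of Ω satisfying σ * H_C * σ⁻¹ = H_C (as sets, i.e., σ normalizes the subgroup H_C), then there exist a permutation π of Fin k, a : Fin k → (ZMod p)ˣ and b : Fin k → ZMod p such that σ = σ_{a,b,π}. -/
def gperm {p k : ℕ} (v : Fin k → ZMod p) : Equiv.Perm (Fin k × ZMod p) :=
  Equiv.prodShear (Equiv.refl (Fin k)) (fun i => Equiv.addRight (v i))

def Hsub {p k : ℕ} (C : Submodule (ZMod p) (Fin k → ZMod p)) :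
    Subgroup (Equiv.Perm (Fin k × ZMod p)) where
  carrier := {g | ∃ v ∈ C, g = gperm v}
  one_mem' := ⟨0, C.zero_mem, by ext ⟨i, x⟩ <;> simp [gperm]⟩
  mul_mem' := by
    rintro g h ⟨v, hv, rfl⟩ ⟨w, hw, rfl⟩
    refine ⟨v + w, C.add_mem hv hw, ?_⟩
    ext ⟨i, x⟩ <;> simp [gperm] <;> ring
  inv_mem' := by
    rintro g ⟨v, hv, rfl⟩
    refine ⟨-v, C.neg_mem hv, ?_⟩
    have h1 : gperm v * gperm (-v) = 1 := by ext ⟨i, x⟩ <;> simp [gperm]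
    exact inv_eq_of_mul_eq_one_right h1

def affineEquiv {p : ℕ} (a : (ZMod p)ˣ) (b : ZMod p) : Equiv.Perm (ZMod p) where
  toFun x := (a : ZMod p) * x + b
  invFun y := ((a⁻¹ : (ZMod p)ˣ) : ZMod p) * (y - b)
  left_inv x := by simp
  right_inv y := by simp

def sigmaPerm {p k : ℕ} (a : Fin k → (ZMod p)ˣ) (b : Fin k → ZMod p)
    (π : Equiv.Perm (Fin k)) : Equiv.Perm (Fin k × ZMod p) :=
  Equiv.prodShear π (fun i => affineEquiv (a i) (b i))

/-!
Fix a fibre `i` and `v ∈ C` with `v i ≠ 0`. Conjugation by `σ` turns `g_v` into some `g_w` with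
`w ∈ C`, i.e. `σ (i, x + v i)` is `σ (i, x)` shifted by `w` inside its fibre. As `v i` generates
`ZMod p`, the fibre of `σ (i, x)` does not depend on `x`, and its second coordinate is affine in
`x` with slope `w j / v i`, which is nonzero because `σ` is injective. Injectivity of `σ` also
makes the induced map on fibres a permutation.
-/

open Function

theorem ZMod.apply_eq_apply_zero_of_periodic {p : ℕ} [Fact p.Prime] {β : Type*}
    {g : ZMod p → β} {t : ZMod p} (hg : Periodic g t) (ht : t ≠ 0) (x : ZMod p) :
    g x = g 0 := by
  have h := hg.nat_mul (x / t).val 0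
  rwa [ZMod.natCast_zmod_val, zero_add, div_mul_cancel₀ x ht] at h

theorem ZMod.eq_mul_add_of_apply_add_eq {p : ℕ} [Fact p.Prime] {f : ZMod p → ZMod p}
    {t c : ZMod p} (ht : t ≠ 0) (hf : ∀ x, f (x + t) = f x + c) (x : ZMod p) :
    f x = c / t * x + f 0 := by
  have hper : Periodic (fun x => f x - c / t * x) t := fun x => by
    simp only [hf, mul_add, div_mul_cancel₀ c ht]
    ring
  have h := ZMod.apply_eq_apply_zero_of_periodic hper ht x
  simp only [mul_zero, sub_zero] at h
  linear_combination h

section Normalizer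

variable {p k : ℕ} {C : Submodule (ZMod p) (Fin k → ZMod p)} {σ : Equiv.Perm (Fin k × ZMod p)}

theorem gperm_apply (v : Fin k → ZMod p) (z : Fin k × ZMod p) :
    gperm v z = (z.1, z.2 + v z.1) :=
  rfl

theorem exists_apply_add_eq_of_conj_mem
    (hσ : ∀ g ∈ Hsub C, σ * g * σ⁻¹ ∈ Hsub C) {v : Fin k → ZMod p} (hv : v ∈ C) :
    ∃ w ∈ C, ∀ i x, σ (i, x + v i) = ((σ (i, x)).1, (σ (i, x)).2 + w (σ (i, x)).1) := by
  obtain ⟨w, hw, hconj⟩ := hσ (gperm v) ⟨v, hv, rfl⟩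
  have hsemiconj : σ * gperm v = gperm w * σ := by
    rw [← hconj, inv_mul_cancel_right]
  exact ⟨w, hw, fun i x => by simpa [gperm_apply] using congrArg (· (i, x)) hsemiconj⟩

theorem exists_affine_on_fiber [Fact p.Prime]
    (hσ : ∀ g ∈ Hsub C, σ * g * σ⁻¹ ∈ Hsub C) {v : Fin k → ZMod p} (hv : v ∈ C) {i : Fin k}
    (hvi : v i ≠ 0) :
    ∃ (j : Fin k) (a : (ZMod p)ˣ) (b : ZMod p), ∀ x, σ (i, x) = (j, a * x + b) := by
  obtain ⟨w, -, hw⟩ := exists_apply_add_eq_of_conj_mem hσ hv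
  set j := (σ (i, 0)).1
  have hfst : ∀ x, (σ (i, x)).1 = j :=
    ZMod.apply_eq_apply_zero_of_periodic (g := fun x => (σ (i, x)).1)
      (fun x => by dsimp only; rw [hw]) hvi
  have hsnd : ∀ x, (σ (i, x + v i)).2 = (σ (i, x)).2 + w j := fun x => by
    rw [hw, hfst]
  have hwj : w j ≠ 0 := by
    intro hwj
    have h : σ (i, 0 + v i) = σ (i, 0) := by rw [hw, hwj, add_zero]
    exact hvi (by simpa using congrArg Prod.snd (σ.injective h))
  exact ⟨j, Units.mk0 (w j / v i) (div_ne_zero hwj hvi), (σ (i, 0)).2,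
    fun x => Prod.ext (hfst x)
      (ZMod.eq_mul_add_of_apply_add_eq (f := fun x => (σ (i, x)).2) hvi hsnd x)⟩

end Normalizer

theorem exists_eq_sigmaPerm_of_affine_on_fibers {p k : ℕ} {σ : Equiv.Perm (Fin k × ZMod p)}
    (h : ∀ i, ∃ (j : Fin k) (a : (ZMod p)ˣ) (b : ZMod p), ∀ x, σ (i, x) = (j, a * x + b)) :
    ∃ (π : Equiv.Perm (Fin k)) (a : Fin k → (ZMod p)ˣ) (b : Fin k → ZMod p),
      σ = sigmaPerm a b π := by
  choose π a b hσ using h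
  have hπ : Injective π := by
    intro i i' hii'
    have h : σ (i, 0) = σ (i', ((a i')⁻¹ : (ZMod p)ˣ) * (b i - b i')) := by
      rw [hσ, hσ, hii', Units.mul_inv_cancel_left, mul_zero, zero_add, sub_add_cancel]
    exact congrArg Prod.fst (σ.injective h)
  exact ⟨Equiv.ofBijective π hπ.bijective_of_finite, a, b, Equiv.ext fun z => hσ z.1 z.2⟩

/-- If `C` has full support and `σ` normalizes `H_C`, then `σ = σ_{a,b,π}` for some
`π`, `a`, `b`. -/
theorem stmt2 {p k : ℕ} (hp : p.Prime)
    (C : Submodule (ZMod p) (Fin k → ZMod p))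
    (hfull : ∀ i : Fin k, ∃ v ∈ C, v i ≠ 0)
    (σ : Equiv.Perm (Fin k × ZMod p))
    (hσ : (fun g => σ * g * σ⁻¹) '' (Hsub C : Set (Equiv.Perm (Fin k × ZMod p)))
        = (Hsub C : Set (Equiv.Perm (Fin k × ZMod p)))) :
    ∃ (π : Equiv.Perm (Fin k)) (a : Fin k → (ZMod p)ˣ) (b : Fin k → ZMod p),
      σ = sigmaPerm a b π := by
  have := Fact.mk hp
  have hconj : ∀ g ∈ Hsub C, σ * g * σ⁻¹ ∈ Hsub C := fun g hg => by
    rw [← SetLike.mem_coe, ← hσ]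
    exact ⟨g, hg, rfl⟩
  refine exists_eq_sigmaPerm_of_affine_on_fibers fun i => ?_
  obtain ⟨v, hv, hvi⟩ := hfull i
  exact exists_affine_on_fiber hconj hv hvi
end

section
/- Let C be a ZMod p-submodule of (Fin k → ZMod p), let a : Fin k → (ZMod p)ˣ, b : Fin k → ZMod p and let π be a permutation of Fin k. Then σ_{a,b,π} normalizes the subgroup H_C (i.e., σ_{a,b,π} * H_C * σ_{a,b,π}⁻¹ = H_C) if and only if for every v ∈ C, the vector v' defined by v' (π i) = a i * v i for all i belongs to C. -/
/-! Conjugation by `σ_{a,b,π}` sends `g_v` to `g_{v'}` with `v' (π i) = a i * v i`, the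
translation parts `b` cancelling. As `v ↦ v'` is injective and `C` is finite, `C` is mapped onto
itself as soon as it is mapped into itself. -/

theorem Set.Finite.image_eq_self_iff_mapsTo {α : Type*} {s : Set α} {f : α → α}
    (hs : s.Finite) (hf : Set.InjOn f s) : f '' s = s ↔ Set.MapsTo f s s :=
  ⟨fun h => Set.mapsTo_iff_image_subset.2 h.subset,
    fun hm => ((hs.injOn_iff_bijOn_of_mapsTo hm).1 hf).image_eq⟩

section MonomialMap

variable {ι R : Type*} [Monoid R]

def monomialMap (a : ι → Rˣ) (π : Equiv.Perm ι) (v : ι → R) : ι → R :=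
  fun j => a (π.symm j) * v (π.symm j)

theorem eq_monomialMap_iff {a : ι → Rˣ} {π : Equiv.Perm ι} {v v' : ι → R} :
    v' = monomialMap a π v ↔ ∀ i, v' (π i) = a i * v i := by
  rw [funext_iff, ← π.forall_congr_right]
  simp [monomialMap]

theorem monomialMap_injective (a : ι → Rˣ) (π : Equiv.Perm ι) :
    Function.Injective (monomialMap a π) := by
  intro v w h
  funext i
  simpa [monomialMap, Units.mul_right_inj] using congrFun h (π i)

end MonomialMap

section Conjugation

variable {p k : ℕ}

theorem gperm_injective : Function.Injective (gperm : (Fin k → ZMod p) → _) := by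
  intro v w h
  funext i
  simpa [gperm] using congrArg (fun g => (g (i, 0)).2) h

theorem coe_Hsub (C : Submodule (ZMod p) (Fin k → ZMod p)) :
    (Hsub C : Set (Equiv.Perm (Fin k × ZMod p))) = gperm '' C := by
  ext g
  simp [Hsub, eq_comm]

theorem sigmaPerm_mul_gperm_mul_inv (a : Fin k → (ZMod p)ˣ) (b : Fin k → ZMod p)
    (π : Equiv.Perm (Fin k)) (v : Fin k → ZMod p) :
    sigmaPerm a b π * gperm v * (sigmaPerm a b π)⁻¹ = gperm (monomialMap a π v) := by
  rw [mul_inv_eq_iff_eq_mul]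
  ext ⟨i, x⟩
  · simp [sigmaPerm, gperm]
  · simp [sigmaPerm, gperm, affineEquiv, monomialMap, mul_add]
    ring

end Conjugation

/-- `σ_{a,b,π}` normalizes `H_C` iff for every `v ∈ C`, the vector `v'` defined by
`v' (π i) = a i * v i` belongs to `C`. -/
theorem stmt4 {p k : ℕ} (hp : p.Prime)
    (C : Submodule (ZMod p) (Fin k → ZMod p))
    (a : Fin k → (ZMod p)ˣ) (b : Fin k → ZMod p) (π : Equiv.Perm (Fin k)) :
    (fun g => sigmaPerm a b π * g * (sigmaPerm a b π)⁻¹) ''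
        (Hsub C : Set (Equiv.Perm (Fin k × ZMod p)))
      = (Hsub C : Set (Equiv.Perm (Fin k × ZMod p)))
    ↔ ∀ v ∈ C, ∀ v' : Fin k → ZMod p,
        (∀ i : Fin k, v' (π i) = (a i : ZMod p) * v i) → v' ∈ C := by
  have : NeZero p := ⟨hp.ne_zero⟩
  rw [coe_Hsub, Set.image_image]
  simp_rw [sigmaPerm_mul_gperm_mul_inv]
  rw [← Set.image_image, (Set.image_injective.2 gperm_injective).eq_iff,
    (Set.toFinite _).image_eq_self_iff_mapsTo (monomialMap_injective a π).injOn]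
  simp only [Set.MapsTo, SetLike.mem_coe, ← eq_monomialMap_iff, forall_eq]
end

section
/- Let F be a field, k : ℕ, and let C be an F-subspace of (Fin k → F). Let d : Fin k → Fˣ and let π be a permutation of Fin k, and let T_{d,π} : (Fin k → F) → (Fin k → F) be the linear map sending v to the vector v' with v' (π i) = d i * v i for all i. If T_{d,π} maps C onto C, then the map T_{d⁻¹,π}, where d⁻¹ i := (d i)⁻¹, maps C^⊥ onto C^⊥, where C^⊥ := {u : Fin k → F | ∀ v ∈ C, ∑ i, u i * v i = 0}. -/
/-!
The monomial maps `T_{d,π}` and `T_{d⁻¹,π}` jointly preserve the dot product: `⟪T_{d⁻¹,π} u, T_{d,π} v⟫ = ⟪u, v⟫`, since the scalars `d i⁻¹ * d i` cancel and `π`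
only reorders the sum. A surjection `T'` with `B (T' u) (T v) = B u v` then carries the
orthogonal of any `C` with `T '' C = C` onto itself: both inclusions move a witness across
the pairing.
-/

open Function

theorem image_orthogonal_eq_self {α β γ : Type*} [Zero γ] (B : α → β → γ) (C : Set β)
    (T : β → β) (T' : α → α) (hB : ∀ u v, B (T' u) (T v) = B u v) (hT' : Surjective T')
    (h : T '' C = C) :
    T' '' {u | ∀ v ∈ C, B u v = 0} = {u | ∀ v ∈ C, B u v = 0} := by
  ext u
  constructor
  · rintro ⟨w, hw, rfl⟩ v hv
    obtain ⟨x, hx, rfl⟩ : v ∈ T '' C := h.symm ▸ hv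
    rw [hB]
    exact hw x hx
  · intro hu
    obtain ⟨w, rfl⟩ := hT' u
    refine ⟨w, fun v hv => ?_, rfl⟩
    rw [← hB]
    exact hu (T v) (h ▸ Set.mem_image_of_mem T hv)

theorem surjective_of_apply_perm_eq_units_mul {ι R : Type*} [Monoid R] (d : ι → Rˣ)
    (π : Equiv.Perm ι) {T : (ι → R) → ι → R}
    (hT : ∀ v i, T v (π i) = d i * v i) : Surjective T := by
  intro u
  refine ⟨fun i => ((d i)⁻¹ : Rˣ) * u (π i), funext fun j => ?_⟩
  rw [← π.apply_symm_apply j, hT, Units.mul_inv_cancel_left]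

theorem sum_mul_eq_of_apply_perm_eq_units_mul {ι R : Type*} [Fintype ι] [CommRing R]
    (d : ι → Rˣ) (π : Equiv.Perm ι) {T T' : (ι → R) → ι → R}
    (hT : ∀ v i, T v (π i) = d i * v i) (hT' : ∀ u i, T' u (π i) = ((d i)⁻¹ : Rˣ) * u i)
    (u v : ι → R) :
    ∑ i, T' u i * T v i = ∑ i, u i * v i := by
  rw [← Equiv.sum_comp π]
  refine Finset.sum_congr rfl fun i _ => ?_
  rw [hT, hT', mul_mul_mul_comm, Units.inv_mul, one_mul]

/-- If the monomial linear map `T_{d,π}` maps the code `C` onto itself, then `T_{d⁻¹,π}`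
maps the dual code `C^⊥` onto itself. -/
theorem stmt5 {F : Type*} [Field F] {k : ℕ}
    (C : Submodule F (Fin k → F)) (d : Fin k → Fˣ) (π : Equiv.Perm (Fin k))
    (T T' : (Fin k → F) →ₗ[F] (Fin k → F))
    (hT : ∀ (v : Fin k → F) (i : Fin k), T v (π i) = (d i : F) * v i)
    (hT' : ∀ (u : Fin k → F) (i : Fin k), T' u (π i) = (((d i)⁻¹ : Fˣ) : F) * u i)
    (h : ⇑T '' (C : Set (Fin k → F)) = (C : Set (Fin k → F))) :
    ⇑T' '' {u : Fin k → F | ∀ v ∈ C, ∑ i : Fin k, u i * v i = 0}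
      = {u : Fin k → F | ∀ v ∈ C, ∑ i : Fin k, u i * v i = 0} :=
  image_orthogonal_eq_self (fun u v => ∑ i, u i * v i) C T T'
    (sum_mul_eq_of_apply_perm_eq_units_mul d π hT hT')
    (surjective_of_apply_perm_eq_units_mul (fun i => (d i)⁻¹) π hT') h
end

section
/- Let F be a field, s k : ℕ with s ≤ k, and let ι : Fin s → Fin k be the natural inclusion (Fin.castLE). Let M : Fin s → (Fin k → F) be a family in standard form, meaning M i (ι j) = 1 if i = j and 0 otherwise, and let C be the span of the M i. Suppose d : Fin k → Fˣ is such that the pointwise multiplication map v ↦ (j ↦ d j * v j) sends C onto C. Then: (a) for every i : Fin s, (j ↦ d j * M i j) = d (ι i) • M i; and (b) if for some t : Fin k and i, i' : Fin s both M i t ≠ 0 and M i' t ≠ 0, then d (ι i) = d (ι i'). Consequently, for any two rows M i and M i' whose supports intersect, there is a single scalar a ∈ Fˣ with (j ↦ d j * M i j) = a • M i and (j ↦ d j * M i' j) = a • M i'. -/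
/-! A vector of `span (range M)` is determined by its coordinates at the pivots `ι j`, so the
rescaled row `j ↦ d j * M i j`, which lies in `C`, equals `d (ι i) • M i`. Reading this at any `t`
in the support of `M i` gives `d t = d (ι i)`, hence rows sharing a support position share the
scalar. -/

section StandardForm

variable {R ι κ : Type*} [Fintype ι] [DecidableEq ι] {M : ι → κ → R} {e : ι → κ}

theorem eq_sum_smul_of_mem_span_of_standardForm [Semiring R]
    (hstd : ∀ i j, M i (e j) = if i = j then 1 else 0) {v : κ → R}
    (hv : v ∈ Submodule.span R (Set.range M)) : v = ∑ j, v (e j) • M j := by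
  induction hv using Submodule.span_induction with
  | mem x hx =>
    obtain ⟨i, rfl⟩ := hx
    simp [hstd, ite_smul, Finset.sum_ite_eq]
  | zero => simp
  | add x y _ _ ihx ihy =>
    simp only [Pi.add_apply, add_smul, Finset.sum_add_distrib]
    rw [← ihx, ← ihy]
  | smul a x _ ih =>
    simp only [Pi.smul_apply, smul_eq_mul, ← smul_smul, ← Finset.smul_sum]
    rw [← ih]

theorem mul_eq_smul_of_mapsTo_span_of_standardForm [CommSemiring R]
    (hstd : ∀ i j, M i (e j) = if i = j then 1 else 0) {d : κ → R}
    (hd : Set.MapsTo (fun v : κ → R => fun j => d j * v j)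
      (Submodule.span R (Set.range M)) (Submodule.span R (Set.range M))) (i : ι) :
    (fun j => d j * M i j) = d (e i) • M i := by
  have hmem : (fun j => d j * M i j) ∈ Submodule.span R (Set.range M) :=
    hd (Submodule.subset_span ⟨i, rfl⟩)
  rw [eq_sum_smul_of_mem_span_of_standardForm hstd hmem]
  simp [hstd, mul_ite, ite_smul, Finset.sum_ite_eq]

end StandardForm

theorem eq_of_mul_eq_smul_of_ne_zero {R κ : Type*} [MulZeroClass R] [IsRightCancelMulZero R]
    {d v : κ → R} {c : R} (h : (fun j => d j * v j) = c • v) {t : κ} (ht : v t ≠ 0) :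
    d t = c :=
  mul_right_cancel₀ ht (congrFun h t)

/-- If `M` is a standard-form generator matrix of `C` and the diagonal map given by `d`
maps `C` onto itself, then each row of `M` is scaled by `d (ι i)`, rows with intersecting
supports are scaled by the same scalar. -/
theorem stmt7 {F : Type*} [Field F] {s k : ℕ} (hsk : s ≤ k)
    (M : Fin s → (Fin k → F))
    (hstd : ∀ i j : Fin s, M i (Fin.castLE hsk j) = if i = j then 1 else 0)
    (C : Submodule F (Fin k → F)) (hC : C = Submodule.span F (Set.range M))
    (d : Fin k → Fˣ)
    (hd : (fun v : Fin k → F => fun j : Fin k => (d j : F) * v j) '' (C : Set (Fin k → F))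
        = (C : Set (Fin k → F))) :
    (∀ i : Fin s, (fun j : Fin k => (d j : F) * M i j) = (d (Fin.castLE hsk i) : F) • M i)
    ∧ (∀ (t : Fin k) (i i' : Fin s), M i t ≠ 0 → M i' t ≠ 0 →
        d (Fin.castLE hsk i) = d (Fin.castLE hsk i'))
    ∧ (∀ i i' : Fin s, ({j : Fin k | M i j ≠ 0} ∩ {j : Fin k | M i' j ≠ 0}).Nonempty →
        ∃ a : Fˣ, (fun j : Fin k => (d j : F) * M i j) = (a : F) • M i
          ∧ (fun j : Fin k => (d j : F) * M i' j) = (a : F) • M i') := by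
  subst hC
  have hrow : ∀ i, (fun j => (d j : F) * M i j) = (d (Fin.castLE hsk i) : F) • M i :=
    mul_eq_smul_of_mapsTo_span_of_standardForm hstd (Set.mapsTo_iff_image_subset.2 hd.subset)
  have hpivot : ∀ (t : Fin k) (i i' : Fin s), M i t ≠ 0 → M i' t ≠ 0 →
      d (Fin.castLE hsk i) = d (Fin.castLE hsk i') := fun t i i' hi hi' =>
    Units.ext <| (eq_of_mul_eq_smul_of_ne_zero (hrow i) hi).symm.trans
      (eq_of_mul_eq_smul_of_ne_zero (hrow i') hi')
  refine ⟨hrow, hpivot, ?_⟩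
  rintro i i' ⟨t, hti, hti'⟩
  exact ⟨d (Fin.castLE hsk i), hrow i, hpivot t i i' hti hti' ▸ hrow i'⟩
end

section
/- Let F be a field, k : ℕ, and let C be a nonzero F-subspace of (Fin k → F). Say C is support-decomposable if there exist nonzero subspaces C₁, C₂ of (Fin k → F) with C₁ ⊓ C₂ = ⊥, C₁ ⊔ C₂ = C, and the supports {i | ∃ v ∈ C₁, v i ≠ 0} and {i | ∃ v ∈ C₂, v i ≠ 0} disjoint. Suppose C is not support-decomposable and d : Fin k → Fˣ is such that the pointwise multiplication map v ↦ (i ↦ d i * v i) sends C onto C. Then there exists a ∈ Fˣ such that for every v ∈ C, (i ↦ d i * v i) = a • v. -/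
/-!
The diagonal map `D` with entries `d i` preserves `C`, hence so does every polynomial in `D`.
Taking the Lagrange polynomial that is `1` at the value `a = d i₀` and `0` at the other values
of `d`, the coordinate projection onto `{i | d i = a}` preserves `C`, so `C` is the sum of its
vectors supported on `{i | d i = a}` and those supported on the complement. These two pieces
have disjoint supports, so by indecomposability `C` lies in one of them; a vector of `C` nonzero
at `i₀` rules out the complement, and on vectors supported on `{i | d i = a}` the map `D` is `a`.
-/

open Polynomial

namespace Submodule

variable {ι R : Type*}

def coordSupport [Semiring R] (C : Submodule R (ι → R)) : Set ι :=
  {i | ∃ v ∈ C, v i ≠ 0}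

def IsSupportDecomposable [Semiring R] (C : Submodule R (ι → R)) : Prop :=
  ∃ C₁ C₂ : Submodule R (ι → R), C₁ ≠ ⊥ ∧ C₂ ≠ ⊥ ∧ C₁ ⊓ C₂ = ⊥ ∧ C₁ ⊔ C₂ = C
    ∧ Disjoint C₁.coordSupport C₂.coordSupport

theorem eval_mul_mem_of_mul_mem [CommSemiring R] {C : Submodule R (ι → R)} {d : ι → R}
    (hD : ∀ v ∈ C, (fun i => d i * v i) ∈ C) (p : R[X]) {v : ι → R} (hv : v ∈ C) :
    (fun i => p.eval (d i) * v i) ∈ C := by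
  induction p using Polynomial.induction_on with
  | C a => simpa [Pi.smul_def] using C.smul_mem a hv
  | add p q hp hq =>
    convert C.add_mem hp hq using 1
    ext i
    simp [add_mul]
  | monomial n a ih =>
    convert hD _ ih using 2 with i
    simp only [eval_mul, eval_C, eval_pow, eval_X, pow_succ]
    ring

theorem coordSupport_subset_of_le_pi_bot [Semiring R] {C : Submodule R (ι → R)} {s : Set ι}
    (h : C ≤ pi s fun _ => ⊥) : C.coordSupport ⊆ sᶜ :=
  fun i ⟨_, hv, hvi⟩ hi => hvi <| (mem_bot R).mp (mem_pi.mp (h hv) i hi)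

theorem pi_bot_inf_pi_compl_bot [Semiring R] (s : Set ι) :
    (pi s fun _ => (⊥ : Submodule R R)) ⊓ pi sᶜ (fun _ => ⊥) = ⊥ := by
  refine eq_bot_iff.mpr fun v ⟨hs, hsc⟩ => (mem_bot R).mpr (funext fun i => ?_)
  by_cases hi : i ∈ s
  · exact (mem_bot R).mp (mem_pi.mp hs i hi)
  · exact (mem_bot R).mp (mem_pi.mp hsc i hi)

theorem isSupportDecomposable_of_le_pi_bot [Semiring R] {C C₁ C₂ : Submodule R (ι → R)}
    {s : Set ι} (h₁ : C₁ ≤ pi sᶜ fun _ => ⊥) (h₂ : C₂ ≤ pi s fun _ => ⊥)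
    (hC₁ : C₁ ≠ ⊥) (hC₂ : C₂ ≠ ⊥) (hC : C₁ ⊔ C₂ = C) : C.IsSupportDecomposable := by
  refine ⟨C₁, C₂, hC₁, hC₂, ?_, hC, ?_⟩
  · rw [eq_bot_iff, ← pi_bot_inf_pi_compl_bot s, inf_comm (pi s _)]
    exact inf_le_inf h₁ h₂
  · have hs := coordSupport_subset_of_le_pi_bot h₁
    rw [compl_compl] at hs
    exact disjoint_compl_right.mono hs (coordSupport_subset_of_le_pi_bot h₂)

theorem sup_inf_pi_bot_eq_of_indicator_mem [Ring R] {C : Submodule R (ι → R)} {s : Set ι}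
    (hs : ∀ v ∈ C, s.indicator v ∈ C) :
    (C ⊓ pi sᶜ fun _ => ⊥) ⊔ (C ⊓ pi s fun _ => ⊥) = C := by
  refine le_antisymm (sup_le inf_le_left inf_le_left) fun v hv => ?_
  have hsc : sᶜ.indicator v ∈ C := by
    rw [Set.indicator_compl]
    exact C.sub_mem hv (hs v hv)
  rw [← Set.indicator_self_add_compl s v]
  refine add_mem_sup ⟨hs v hv, mem_pi.mpr fun i hi => ?_⟩ ⟨hsc, mem_pi.mpr fun i hi => ?_⟩
  · exact (mem_bot R).mpr (Set.indicator_of_notMem hi v)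
  · exact (mem_bot R).mpr (Set.indicator_of_notMem (Set.notMem_compl_iff.mpr hi) v)

theorem le_pi_bot_or_le_pi_bot_of_not_isSupportDecomposable [Ring R] {C : Submodule R (ι → R)}
    {s : Set ι} (hC : ¬ C.IsSupportDecomposable) (hs : ∀ v ∈ C, s.indicator v ∈ C) :
    (C ≤ pi sᶜ fun _ => ⊥) ∨ C ≤ pi s fun _ => ⊥ := by
  have hsup := sup_inf_pi_bot_eq_of_indicator_mem hs
  by_contra! h
  refine hC (isSupportDecomposable_of_le_pi_bot inf_le_right inf_le_right ?_ ?_ hsup)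
  · exact fun h₀ => h.2 (inf_eq_left.mp (by simpa [h₀] using hsup))
  · exact fun h₀ => h.1 (inf_eq_left.mp (by simpa [h₀] using hsup))

theorem indicator_mem_of_mul_mem {F : Type*} [Field F] [Finite ι] {C : Submodule F (ι → F)}
    {d : ι → F} (hD : ∀ v ∈ C, (fun i => d i * v i) ∈ C) (a : F) :
    ∀ v ∈ C, {i | d i = a}.indicator v ∈ C := by
  classical
  intro v hv
  set t : Finset F := insert a (Set.finite_range d).toFinset
  convert eval_mul_mem_of_mul_mem hD (Lagrange.basis t id a) hv using 1
  ext i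
  by_cases hi : d i = a
  · have h₁ : (Lagrange.basis t id a).eval a = 1 :=
      Lagrange.eval_basis_self (v := id) Function.injective_id.injOn (Finset.mem_insert_self a _)
    rw [Set.indicator_of_mem (s := {i | d i = a}) hi, hi, h₁, one_mul]
  · have h₀ : (Lagrange.basis t id a).eval (d i) = 0 :=
      Lagrange.eval_basis_of_ne (v := id) (Ne.symm hi) (Finset.mem_insert_of_mem (by simp))
    rw [Set.indicator_of_notMem (s := {i | d i = a}) hi, h₀, zero_mul]

end Submodule

open Submodule in
theorem stmt8_general {F : Type*} [Field F] {k : ℕ}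
    (C : Submodule F (Fin k → F))
    (hindec : ¬ ∃ C₁ C₂ : Submodule F (Fin k → F), C₁ ≠ ⊥ ∧ C₂ ≠ ⊥
        ∧ C₁ ⊓ C₂ = ⊥ ∧ C₁ ⊔ C₂ = C
        ∧ Disjoint {i : Fin k | ∃ v ∈ C₁, v i ≠ 0} {i : Fin k | ∃ v ∈ C₂, v i ≠ 0})
    (d : Fin k → Fˣ)
    (hd : (fun v : Fin k → F => fun i : Fin k => (d i : F) * v i) '' (C : Set (Fin k → F))
        = (C : Set (Fin k → F))) :
    ∃ a : Fˣ, ∀ v ∈ C, (fun i : Fin k => (d i : F) * v i) = (a : F) • v := by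
  have hD : ∀ v ∈ C, (fun i => (d i : F) * v i) ∈ C :=
    fun v hv => hd.subset (Set.mem_image_of_mem _ hv)
  rcases C.coordSupport.eq_empty_or_nonempty with hC₀ | ⟨i₀, v, hv, hv₀⟩
  · refine ⟨1, fun v hv => ?_⟩
    obtain rfl : v = 0 := funext fun i => not_not.mp fun h => hC₀.subset ⟨v, hv, h⟩
    ext
    simp
  rcases le_pi_bot_or_le_pi_bot_of_not_isSupportDecomposable hindec
    (indicator_mem_of_mul_mem hD (d i₀)) with hC | hC
  · refine ⟨d i₀, fun u hu => funext fun i => ?_⟩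
    by_cases hi : (d i : F) = d i₀
    · simp [hi]
    · simp [(mem_bot F).mp (mem_pi.mp (hC hu) i hi)]
  · exact absurd ((mem_bot F).mp (mem_pi.mp (hC hv) i₀ rfl)) hv₀

/-- If a nonzero code `C` is not support-decomposable and the diagonal map given by `d`
maps `C` onto itself, then it acts on `C` as a single scalar. -/
theorem stmt8 {F : Type*} [Field F] {k : ℕ}
    (C : Submodule F (Fin k → F)) (hC : C ≠ ⊥)
    (hindec : ¬ ∃ C₁ C₂ : Submodule F (Fin k → F), C₁ ≠ ⊥ ∧ C₂ ≠ ⊥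
        ∧ C₁ ⊓ C₂ = ⊥ ∧ C₁ ⊔ C₂ = C
        ∧ Disjoint {i : Fin k | ∃ v ∈ C₁, v i ≠ 0} {i : Fin k | ∃ v ∈ C₂, v i ≠ 0})
    (d : Fin k → Fˣ)
    (hd : (fun v : Fin k → F => fun i : Fin k => (d i : F) * v i) '' (C : Set (Fin k → F))
        = (C : Set (Fin k → F))) :
    ∃ a : Fˣ, ∀ v ∈ C, (fun i : Fin k => (d i : F) * v i) = (a : F) • v :=
  stmt8_general C hindec d hd
end

section
/- Let C be a ZMod p-submodule of (Fin k → ZMod p), and let i, j : Fin k be indices such that there exists v ∈ C with v i ≠ 0. Then the following are equivalent: (1) there exists a bijection ψ : ZMod p ≃ ZMod p such that ψ(x + v i) = ψ(x) + v j for all v ∈ C and all x : ZMod p; (2) there exists a unit a ∈ (ZMod p)ˣ such that v j = a * v i for all v ∈ C. -/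
/-!
Both sides only see the coordinate functionals `v ↦ v i` and `v ↦ v j` on `C`.
A bijection `ψ` intertwining translation by `v i` with translation by `v j` forces
`v i = 0 ↔ v j = 0` (compare `ψ (0 + v i)` with `ψ 0`), so the two functionals have the
same kernel and are therefore proportional; the ratio is a unit because the first
functional is nonzero. Conversely, multiplication by the unit is such a bijection.
-/

open LinearMap

variable {K M : Type*} [Field K] [AddCommGroup M] [Module K M]

theorem LinearMap.exists_smul_eq_of_ker_le {f g : M →ₗ[K] K} (h : ker f ≤ ker g) :
    ∃ a : K, a • f = g := by
  have hg := mem_span_of_iInf_ker_le_ker (L := fun _ : Unit ↦ f) (K := g) (by simpa using h)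
  simpa [Set.range_const, Submodule.mem_span_singleton] using hg

theorem LinearMap.ker_eq_of_map_add_eq {f g : M →ₗ[K] K} {ψ : K ≃ K}
    (hψ : ∀ m x, ψ (x + f m) = ψ x + g m) : ker f = ker g := by
  ext m
  have h0 := hψ m 0
  simp only [mem_ker, zero_add] at h0 ⊢
  constructor
  · intro hf
    rwa [hf, left_eq_add] at h0
  · intro hg
    rw [hg, add_zero] at h0
    exact ψ.injective h0

theorem LinearMap.exists_equiv_map_add_iff_exists_unit {f g : M →ₗ[K] K} (hf : f ≠ 0) :
    (∃ ψ : K ≃ K, ∀ m x, ψ (x + f m) = ψ x + g m) ↔ ∃ a : Kˣ, ∀ m, g m = a * f m := by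
  constructor
  · rintro ⟨ψ, hψ⟩
    have hker := ker_eq_of_map_add_eq hψ
    obtain ⟨a, rfl⟩ := exists_smul_eq_of_ker_le hker.le
    have ha : a ≠ 0 := by
      rintro rfl
      exact hf (ker_eq_top.mp (by simpa using hker))
    exact ⟨Units.mk0 a ha, fun m ↦ rfl⟩
  · rintro ⟨a, ha⟩
    exact ⟨Equiv.mulLeft₀ (a : K) a.ne_zero, fun m x ↦ by simp [ha, mul_add]⟩

/-- The `i`-th and `j`-th fibers are equivalent `H_C`-orbits iff the `j`-th coordinate of
every codeword is a fixed unit multiple of the `i`-th coordinate. -/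
theorem stmt10 {p k : ℕ} (hp : p.Prime)
    (C : Submodule (ZMod p) (Fin k → ZMod p))
    (i j : Fin k) (hi : ∃ v ∈ C, v i ≠ 0) :
    (∃ ψ : ZMod p ≃ ZMod p, ∀ v ∈ C, ∀ x : ZMod p, ψ (x + v i) = ψ x + v j)
      ↔ ∃ a : (ZMod p)ˣ, ∀ v ∈ C, v j = (a : ZMod p) * v i := by
  have : Fact p.Prime := ⟨hp⟩
  let coord (l : Fin k) : C →ₗ[ZMod p] ZMod p := (LinearMap.proj l).comp C.subtype
  have hcoord : coord i ≠ 0 := by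
    obtain ⟨v, hv, hvi⟩ := hi
    exact fun h ↦ hvi (LinearMap.congr_fun h ⟨v, hv⟩)
  simpa [coord] using exists_equiv_map_add_iff_exists_unit (g := coord j) hcoord
end

section
/- Let G be a finite group, H a subgroup of G, q a prime, Q a Sylow q-subgroup of H, and P a subgroup of H such that every element of H can be written as x * y with x ∈ P and y ∈ Q. Suppose that the normalizer N_G(H) is contained in the normalizer N_G(P). Then for every g ∈ G, g ∈ N_G(H) if and only if there exist n ∈ N_G(P) ⊓ N_G(Q) and h ∈ H with g = n * h. -/
/-!
`H = P ⊔ Q`, so `N_G(P) ⊓ N_G(Q) ≤ N_G(H)`, which gives one inclusion. For the other, a maximal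
`q`-subgroup of `H` is a Sylow subgroup of `H`, and `N_G(H)` permutes the Sylow `q`-subgroups of
`H` by conjugation. Since `H` already acts transitively on them, every `g ∈ N_G(H)` can be
corrected by some `h ∈ H` so that `g * h` normalizes `Q` (Frattini's argument); `g * h` also lies
in `N_G(H) ≤ N_G(P)`, and `g = (g * h) * h⁻¹`.
-/

open Subgroup

section

variable {G : Type*} [Group G] {H : Subgroup G} {p : ℕ}

theorem Subgroup.map_conj_mul (a b : G) (K : Subgroup G) :
    K.map (MulAut.conj (a * b) : G →* G)
      = (K.map (MulAut.conj b : G →* G)).map (MulAut.conj a : G →* G) := by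
  rw [map_map, map_mul]
  rfl

theorem Sylow.exists_map_subtype_eq_of_maximal {Q : Subgroup G} (hQH : Q ≤ H)
    (hQ : IsPGroup p Q) (hmax : ∀ R : Subgroup G, R ≤ H → IsPGroup p R → Q ≤ R → R = Q) :
    ∃ S : Sylow p H, (S : Subgroup H).map H.subtype = Q := by
  have hQH' : IsPGroup p (Q.subgroupOf H) := by
    rw [← comap_subtype]
    exact hQ.comap_subtype
  obtain ⟨S, hS⟩ := hQH'.exists_le_sylow
  refine ⟨S, hmax _ (map_subtype_le _) (S.isPGroup'.map _) ?_⟩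
  simpa [subgroupOf_map_subtype, inf_of_le_left hQH] using map_mono (f := H.subtype) hS

theorem Sylow.map_subtype_smul (g : normalizer (H : Set G)) (S : Sylow p H) :
    ((g • S : Sylow p H) : Subgroup H).map H.subtype
      = ((S : Subgroup H).map H.subtype).map (MulAut.conj (g : G) : G →* G) := by
  change map H.subtype (map (MulDistribMulAction.toMonoidHom H g) S) = _
  rw [map_map, map_map]
  rfl

theorem Sylow.map_subtype_self_smul (h : H) (S : Sylow p H) :
    ((h • S : Sylow p H) : Subgroup H).map H.subtype
      = ((S : Subgroup H).map H.subtype).map (MulAut.conj (h : G) : G →* G) :=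
  Sylow.map_subtype_smul (inclusion H.le_normalizer h) S

theorem Sylow.exists_mul_mem_normalizer_map_subtype [Fact p.Prime] [Finite (Sylow p H)]
    (S : Sylow p H) {g : G} (hg : g ∈ normalizer (H : Set G)) :
    ∃ h ∈ H, g * h ∈ normalizer (((S : Subgroup H).map H.subtype : Subgroup G) : Set G) := by
  obtain ⟨h, hh⟩ := MulAction.exists_smul_eq H S ((⟨g, hg⟩⁻¹ : normalizer (H : Set G)) • S)
  have key := congrArg (fun T : Sylow p H => (T : Subgroup H).map H.subtype) hh
  simp only [Sylow.map_subtype_self_smul, Sylow.map_subtype_smul, InvMemClass.coe_inv] at key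
  refine ⟨h, h.2, ?_⟩
  rw [mem_normalizer_iff_map_conj_eq, map_conj_mul, key, ← map_conj_mul, mul_inv_cancel, map_one]
  exact map_id _

theorem Subgroup.eq_sup_of_forall_mem_mul {P Q : Subgroup G} (hPH : P ≤ H) (hQH : Q ≤ H)
    (hPQ : ∀ h ∈ H, ∃ x ∈ P, ∃ y ∈ Q, h = x * y) : H = P ⊔ Q := by
  refine le_antisymm (fun h hh => ?_) (sup_le hPH hQH)
  obtain ⟨x, hx, y, hy, rfl⟩ := hPQ h hh
  exact mul_mem_sup hx hy

end

/-- Frattini-type argument: if `H = P Q` with `Q` a Sylow `q`-subgroup of `H` and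
`N_G(H) ≤ N_G(P)`, then `N_G(H) = (N_G(P) ⊓ N_G(Q)) H`. -/
theorem stmt15 {G : Type*} [Group G] [Finite G] (q : ℕ) (hq : q.Prime)
    (H P Q : Subgroup G) (hPH : P ≤ H) (hQH : Q ≤ H)
    (hQp : IsPGroup q Q)
    (hQmax : ∀ R : Subgroup G, R ≤ H → IsPGroup q R → Q ≤ R → R = Q)
    (hPQ : ∀ h ∈ H, ∃ x ∈ P, ∃ y ∈ Q, h = x * y)
    (hN : Subgroup.normalizer (H : Set G) ≤ Subgroup.normalizer (P : Set G)) :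
    ∀ g : G, g ∈ Subgroup.normalizer (H : Set G)
      ↔ ∃ n ∈ Subgroup.normalizer (P : Set G) ⊓ Subgroup.normalizer (Q : Set G), ∃ h ∈ H, g = n * h := by
  have : Fact q.Prime := ⟨hq⟩
  intro g
  constructor
  · intro hg
    obtain ⟨S, hS⟩ := Sylow.exists_map_subtype_eq_of_maximal hQH hQp hQmax
    obtain ⟨h, hh, hghQ⟩ := S.exists_mul_mem_normalizer_map_subtype hg
    rw [hS] at hghQ
    exact ⟨g * h, ⟨hN (mul_mem hg (le_normalizer hh)), hghQ⟩, h⁻¹, inv_mem hh, by group⟩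
  · rintro ⟨n, hn, h, hh, rfl⟩
    have hnH : n ∈ normalizer (H : Set G) := by
      rw [eq_sup_of_forall_mem_mul hPH hQH hPQ]
      exact normalizer_inf_normalizer_le_normalizer_sup P Q hn
    exact mul_mem hnH (le_normalizer hh)
end

section
/- Let p be an odd prime and k : ℕ. Let D := Fin k → DihedralGroup p with the pointwise group structure, and let H be a subgroup of D such that for every i : Fin k the i-th coordinate projection maps H onto DihedralGroup p. Let Rot denote the subgroup of DihedralGroup p consisting of the rotations {DihedralGroup.r a | a : ZMod p}, and let GRot denote the subgroup of D of tuples all of whose coordinates are rotations. Then for every i : Fin k, the image of H ⊓ GRot under the i-th coordinate projection equals Rot. -/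
/-!
Every square in the dihedral group is a rotation, and for odd `p` every rotation `r a` is the
square of `r (a / 2)`. Lifting `r (a / 2)` to some `h ∈ H` in coordinate `i`, the element `h * h`
lies in `H`, has only rotations as coordinates, and has `i`-th coordinate `r a`.
-/

/-- The subgroup of rotations `{r a | a : ZMod n}` of the dihedral group. -/
def rotSubgroup (n : ℕ) : Subgroup (DihedralGroup n) where
  carrier := {x | ∃ a : ZMod n, x = DihedralGroup.r a}
  one_mem' := ⟨0, DihedralGroup.one_def⟩
  mul_mem' := by
    rintro _ _ ⟨a, rfl⟩ ⟨b, rfl⟩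
    exact ⟨a + b, rfl⟩
  inv_mem' := by
    rintro _ ⟨a, rfl⟩
    exact ⟨-a, rfl⟩

section SubdirectProduct

variable {ι : Type*} {G : ι → Type*} [∀ i, Group (G i)]

theorem Subgroup.map_eval_inf_pi_le (H : Subgroup ((i : ι) → G i))
    (K : (i : ι) → Subgroup (G i)) (i : ι) :
    (H ⊓ Subgroup.pi Set.univ K).map (Pi.evalMonoidHom G i) ≤ K i := by
  rintro _ ⟨h, ⟨-, hK⟩, rfl⟩
  exact hK i (Set.mem_univ i)

theorem Subgroup.mul_self_mem_map_eval_inf_pi (H : Subgroup ((i : ι) → G i))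
    (hsub : ∀ (i : ι) (x : G i), ∃ h ∈ H, h i = x)
    (K : (i : ι) → Subgroup (G i)) (hK : ∀ i (x : G i), x * x ∈ K i) (i : ι) (x : G i) :
    x * x ∈ (H ⊓ Subgroup.pi Set.univ K).map (Pi.evalMonoidHom G i) := by
  obtain ⟨h, hH, rfl⟩ := hsub i x
  exact ⟨h * h, ⟨mul_mem hH hH, fun j _ => hK j (h j)⟩, rfl⟩

end SubdirectProduct

namespace DihedralGroup

theorem mul_self_mem_rotSubgroup {n : ℕ} (x : DihedralGroup n) : x * x ∈ rotSubgroup n := by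
  cases x with
  | r a => exact ⟨a + a, rfl⟩
  | sr a => exact ⟨a - a, rfl⟩

theorem exists_r_mul_self_eq {n : ℕ} (hn : Odd n) (a : ZMod n) :
    ∃ b : ZMod n, r b * r b = r a := by
  have hinv : (2 : ZMod n) * (2 : ZMod n)⁻¹ = 1 := by
    exact_mod_cast ZMod.coe_mul_inv_eq_one 2 (Nat.coprime_two_left.mpr hn)
  refine ⟨a * (2 : ZMod n)⁻¹, ?_⟩
  rw [r_mul_r]
  congr 1
  linear_combination a * hinv

end DihedralGroup

theorem stmt16_general {p k : ℕ} (hodd : Odd p)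
    (H : Subgroup (Fin k → DihedralGroup p))
    (hsub : ∀ (i : Fin k) (x : DihedralGroup p), ∃ h ∈ H, h i = x) :
    ∀ i : Fin k,
      Subgroup.map (Pi.evalMonoidHom (fun _ : Fin k => DihedralGroup p) i)
          (H ⊓ Subgroup.pi Set.univ (fun _ : Fin k => rotSubgroup p))
        = rotSubgroup p := by
  intro i
  refine le_antisymm (Subgroup.map_eval_inf_pi_le H _ i) ?_
  rintro _ ⟨a, rfl⟩
  obtain ⟨b, hb⟩ := DihedralGroup.exists_r_mul_self_eq hodd a
  rw [← hb]
  exact Subgroup.mul_self_mem_map_eval_inf_pi H hsub _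
    (fun _ => DihedralGroup.mul_self_mem_rotSubgroup) i _

/-- For a subdirect product `H` of `k` copies of the dihedral group of order `2p`, the
image of `H ⊓ GRot` under each coordinate projection is the full rotation subgroup. -/
theorem stmt16 {p k : ℕ} (hp : p.Prime) (hodd : Odd p)
    (H : Subgroup (Fin k → DihedralGroup p))
    (hsub : ∀ (i : Fin k) (x : DihedralGroup p), ∃ h ∈ H, h i = x) :
    ∀ i : Fin k,
      Subgroup.map (Pi.evalMonoidHom (fun _ : Fin k => DihedralGroup p) i)
          (H ⊓ Subgroup.pi Set.univ (fun _ : Fin k => rotSubgroup p))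
        = rotSubgroup p :=
  stmt16_general hodd H hsub
end

section
/- Let p be an odd prime and k : ℕ. Let D := Fin k → DihedralGroup p with the pointwise group structure, and let H be a subgroup of D such that for every i : Fin k the i-th coordinate projection maps H onto DihedralGroup p. Let GRot denote the subgroup of D of tuples all of whose coordinates are rotations (of the form DihedralGroup.r a), and set P := H ⊓ GRot. Then: (a) P is a normal subgroup of H; (b) P is a Sylow p-subgroup of H; and (c) for every Sylow 2-subgroup Q of H, every element h ∈ H can be written as h = x * y with x ∈ P and y ∈ Q. -/
namespace Sylow

variable {G : Type*} [Group G] {p : ℕ}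

def ofMaximalLE {H Q : Subgroup G} (hQH : Q ≤ H) (hQ : IsPGroup p Q)
    (hmax : ∀ R : Subgroup G, R ≤ H → IsPGroup p R → Q ≤ R → R = Q) : Sylow p H where
  toSubgroup := Q.subgroupOf H
  isPGroup' := hQ.comap_subtype
  is_maximal' {R} hR hQR := by
    have hRQ : R.map H.subtype = Q :=
      hmax _ (Subgroup.map_subtype_le R) (hR.map H.subtype)
        fun x hx => ⟨⟨x, hQH hx⟩, hQR hx, rfl⟩
    refine le_antisymm (fun x hx => ?_) hQR
    exact hRQ ▸ Subgroup.mem_map_of_mem H.subtype hx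

end Sylow

section

open Subgroup

variable {G : Type*} [Group G] [Finite G] {p q : ℕ} [Fact p.Prime]

theorem IsPGroup.eq_of_le_of_not_dvd_relIndex {N R H : Subgroup G} (hR : IsPGroup p R)
    (hNR : N ≤ R) (hRH : R ≤ H) (hN : ¬ p ∣ N.relIndex H) : R = N := by
  obtain ⟨m, hm⟩ := IsPGroup.iff_card.mp hR
  have hdvd_card : N.relIndex R ∣ p ^ m := hm ▸ relIndex_dvd_card N R
  have hdvd_index : N.relIndex R ∣ N.relIndex H :=
    ⟨_, (relIndex_mul_relIndex N R H hNR hRH).symm⟩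
  have hcop : Nat.Coprime (p ^ m) (N.relIndex H) :=
    ((Nat.Prime.coprime_iff_not_dvd Fact.out).mpr hN).pow_left m
  exact le_antisymm
    (relIndex_eq_one.mp (Nat.eq_one_of_dvd_coprimes hcop hdvd_card hdvd_index)) hNR

variable [Fact q.Prime]

theorem IsPGroup.isComplement'_of_index_eq_pow (hpq : p ≠ q) {N : Subgroup G}
    (hN : IsPGroup p N) {b : ℕ} (hidx : N.index = q ^ b) (Q : Sylow q G) :
    N.IsComplement' Q := by
  obtain ⟨a, ha⟩ := IsPGroup.iff_card.mp hN
  have hcop : Nat.Coprime (p ^ a) (q ^ b) :=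
    ((Nat.coprime_primes Fact.out Fact.out).mpr hpq).pow a b
  have hG : Nat.card G = p ^ a * q ^ b := by rw [← N.card_mul_index, ha, hidx]
  have hQ : Nat.card Q = q ^ b := by
    rw [Q.card_eq_multiplicity, hG, Nat.factorization_mul_apply_of_coprime hcop,
      Nat.Prime.factorization_pow Fact.out, Nat.Prime.factorization_pow Fact.out]
    simp [hpq]
  exact isComplement'_of_coprime (by rw [ha, hQ, hG]) (by rwa [ha, hQ])

theorem IsPGroup.exists_mul_eq_of_relIndex_eq_pow (hpq : p ≠ q) {N H Q : Subgroup G}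
    (hN : IsPGroup p N) {b : ℕ} (hidx : N.relIndex H = q ^ b) (hQH : Q ≤ H) (hQ : IsPGroup q Q)
    (hmax : ∀ R : Subgroup G, R ≤ H → IsPGroup q R → Q ≤ R → R = Q) :
    ∀ h ∈ H, ∃ x ∈ N, ∃ y ∈ Q, h = x * y := by
  intro h hh
  have hcompl := (hN.comap_subtype (K := H)).isComplement'_of_index_eq_pow hpq hidx
    (Sylow.ofMaximalLE hQH hQ hmax)
  obtain ⟨⟨⟨x, hx⟩, ⟨y, hy⟩⟩, hxy⟩ := hcompl.2 ⟨h, hh⟩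
  exact ⟨x, hx, y, hy, congrArg Subtype.val hxy.symm⟩

end

theorem MonoidHom.ker_compLeft {M N : Type*} [Group M] [MulOneClass N] (f : M →* N) (ι : Type*) :
    (f.compLeft ι).ker = Subgroup.pi Set.univ fun _ => f.ker := by
  ext g
  simp [Subgroup.mem_pi, funext_iff]

namespace DihedralGroup

variable {n : ℕ}

def sign (n : ℕ) : DihedralGroup n →* ℤˣ where
  toFun
    | r _ => 1
    | sr _ => -1
  map_one' := rfl
  map_mul' := by rintro (a | a) (b | b) <;> simp

@[simp] theorem sign_r (a : ZMod n) : sign n (r a) = 1 := rfl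

@[simp] theorem sign_sr (a : ZMod n) : sign n (sr a) = -1 := rfl

theorem ker_sign : (sign n).ker = rotSubgroup n := by
  ext (a | a) <;> simp [rotSubgroup]

theorem pow_eq_one_of_mem_rotSubgroup {x : DihedralGroup n} (hx : x ∈ rotSubgroup n) :
    x ^ n = 1 := by
  obtain ⟨a, rfl⟩ := hx
  simp [r_pow]

variable {ι : Type*}

theorem pi_rotSubgroup_eq_ker :
    Subgroup.pi Set.univ (fun _ : ι => rotSubgroup n) = ((sign n).compLeft ι).ker := by
  rw [MonoidHom.ker_compLeft, ker_sign]

theorem normal_pi_rotSubgroup : (Subgroup.pi Set.univ fun _ : ι => rotSubgroup n).Normal :=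
  pi_rotSubgroup_eq_ker ▸ inferInstance

theorem isPGroup_pi_rotSubgroup : IsPGroup n (Subgroup.pi Set.univ fun _ : ι => rotSubgroup n) :=
  fun g => ⟨1, Subtype.ext <| funext fun i => by
    simpa using pow_eq_one_of_mem_rotSubgroup (g.2 i trivial)⟩

theorem exists_relIndex_pi_rotSubgroup_eq_two_pow [Finite ι]
    (H : Subgroup (ι → DihedralGroup n)) :
    ∃ b, (Subgroup.pi Set.univ fun _ : ι => rotSubgroup n).relIndex H = 2 ^ b := by
  have hcard : Nat.card (ι → ℤˣ) = 2 ^ Nat.card ι := by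
    simp [Nat.card_fun, Nat.card_eq_fintype_card]
  have hdvd := (H.map ((sign n).compLeft ι)).card_subgroup_dvd_card
  rw [hcard] at hdvd
  obtain ⟨b, -, hb⟩ := (Nat.dvd_prime_pow Nat.prime_two).mp hdvd
  refine ⟨b, ?_⟩
  rw [pi_rotSubgroup_eq_ker, Subgroup.relIndex_ker, hb]

end DihedralGroup

open DihedralGroup in
theorem stmt18_general {p k : ℕ} (hp : p.Prime) (hodd : Odd p)
    (H : Subgroup (Fin k → DihedralGroup p))
    (P : Subgroup (Fin k → DihedralGroup p))
    (hP : P = H ⊓ Subgroup.pi Set.univ (fun _ : Fin k => rotSubgroup p)) :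
    (P.subgroupOf H).Normal
    ∧ (IsPGroup p P
        ∧ ∀ R : Subgroup (Fin k → DihedralGroup p),
            R ≤ H → IsPGroup p R → P ≤ R → R = P)
    ∧ ∀ Q : Subgroup (Fin k → DihedralGroup p), Q ≤ H → IsPGroup 2 Q →
        (∀ R : Subgroup (Fin k → DihedralGroup p),
            R ≤ H → IsPGroup 2 R → Q ≤ R → R = Q) →
        ∀ h ∈ H, ∃ x ∈ P, ∃ y ∈ Q, h = x * y := by
  have := Fact.mk hp
  have hp2 : p ≠ 2 := by rintro rfl; exact Nat.not_odd_iff_even.mpr even_two hodd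
  have hPp : IsPGroup p P := hP ▸ isPGroup_pi_rotSubgroup.to_le inf_le_right
  obtain ⟨b, hb⟩ := exists_relIndex_pi_rotSubgroup_eq_two_pow (n := p) H
  have hPidx : P.relIndex H = 2 ^ b := by rw [hP, Subgroup.inf_relIndex_left, hb]
  refine ⟨?_, ⟨hPp, fun R hRH hR hPR => hR.eq_of_le_of_not_dvd_relIndex hPR hRH ?_⟩,
    fun Q hQH hQ hmax => hPp.exists_mul_eq_of_relIndex_eq_pow hp2 hPidx hQH hQ hmax⟩
  · rw [hP, Subgroup.inf_subgroupOf_left]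
    exact normal_pi_rotSubgroup.subgroupOf H
  · rw [hPidx]
    exact fun h => hp2 ((Nat.prime_dvd_prime_iff_eq hp Nat.prime_two).mp (hp.dvd_of_dvd_pow h))

/-- For a subdirect product `H` of `k` copies of the dihedral group of order `2p` (`p` an
odd prime) and `P := H ⊓ GRot`: (a) `P` is normal in `H`; (b) `P` is a Sylow `p`-subgroup
of `H`; (c) for every Sylow `2`-subgroup `Q` of `H`, `H = P Q`. -/
theorem stmt18 {p k : ℕ} (hp : p.Prime) (hodd : Odd p)
    (H : Subgroup (Fin k → DihedralGroup p))
    (hsub : ∀ (i : Fin k) (x : DihedralGroup p), ∃ h ∈ H, h i = x)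
    (P : Subgroup (Fin k → DihedralGroup p))
    (hP : P = H ⊓ Subgroup.pi Set.univ (fun _ : Fin k => rotSubgroup p)) :
    (P.subgroupOf H).Normal
    ∧ (IsPGroup p P
        ∧ ∀ R : Subgroup (Fin k → DihedralGroup p),
            R ≤ H → IsPGroup p R → P ≤ R → R = P)
    ∧ ∀ Q : Subgroup (Fin k → DihedralGroup p), Q ≤ H → IsPGroup 2 Q →
        (∀ R : Subgroup (Fin k → DihedralGroup p),
            R ≤ H → IsPGroup 2 R → Q ≤ R → R = Q) →
        ∀ h ∈ H, ∃ x ∈ P, ∃ y ∈ Q, h = x * y :=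
  stmt18_general hp hodd H P hP
end

section
/- Let p be an odd prime. In the permutation group Equiv.Perm (ZMod p), let t be the translation x ↦ x + 1 and let r be the negation x ↦ -x. Then a permutation σ of ZMod p normalizes both the subgroup generated by t and the subgroup generated by r if and only if there exists a unit u ∈ (ZMod p)ˣ such that σ is the permutation x ↦ u * x. -/
/-!
Conjugating the translation `t : x ↦ x + 1` by `σ` must give another translation `x ↦ x + c`,
so `σ (x + 1) = σ x + c` and `σ` is affine, `σ x = c * x + σ 0`. Conjugating the negation `r`
must give a nontrivial element of `{1, r}`, i.e. `r` itself, so `σ` is odd; as `2` is invertible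
in `ZMod p`, this forces `σ 0 = 0`. Bijectivity makes `c` a unit. Conversely, multiplication by a
unit `u` conjugates `t` to the translation by `u` and commutes with `r`.
-/

open Equiv Subgroup

namespace ZMod

theorem eq_zero_of_neg_eq_self {n : ℕ} (hn : Odd n) {a : ZMod n} (h : -a = a) : a = 0 :=
  ((neg_eq_self_iff a).mp h).resolve_right (by obtain ⟨k, rfl⟩ := hn; omega)

theorem map_eq_mul_add_of_map_add_one {n : ℕ} {f : ZMod n → ZMod n} {c : ZMod n}
    (h : ∀ x, f (x + 1) = f x + c) (x : ZMod n) : f x = c * x + f 0 := by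
  obtain ⟨k, rfl⟩ := intCast_surjective x
  induction k using Int.induction_on with
  | zero => simp
  | succ k ih => push_cast at ih ⊢; rw [h, ih]; ring
  | pred k ih =>
    have := h ((-k - 1 : ℤ) : ZMod n)
    push_cast at this ih ⊢
    rw [sub_add_cancel, ih] at this
    linear_combination -this

end ZMod

namespace Equiv.Perm

theorem mem_closure_neg_iff {α : Type*} [InvolutiveNeg α] {g : Perm α} :
    g ∈ closure {Equiv.neg α} ↔ g = 1 ∨ g = Equiv.neg α := by
  have hsq : Equiv.neg α ^ (2 : ℤ) = 1 := by ext; rw [zpow_two, Perm.mul_apply]; simp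
  refine ⟨fun hg => ?_, ?_⟩
  · obtain ⟨k, rfl⟩ := mem_closure_singleton.mp hg
    rw [zpow_eq_zpow_emod k hsq]
    rcases Int.emod_two_eq k with h | h <;> simp [h]
  · rintro (rfl | rfl)
    exacts [one_mem _, mem_closure_singleton_self _]

theorem map_neg_of_mem_normalizer {α : Type*} [InvolutiveNeg α] (hne : Equiv.neg α ≠ 1)
    {σ : Perm α} (h : σ ∈ normalizer (closure {Equiv.neg α} : Set (Perm α))) (x : α) :
    σ (-x) = -σ x := by
  have hconj : σ * Equiv.neg α * σ⁻¹ = Equiv.neg α :=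
    (mem_closure_neg_iff.mp ((h _).mp (mem_closure_singleton_self _))).resolve_left
      (conj_eq_one_iff.not.mpr hne)
  simpa using congr($hconj (σ x))

theorem range_toPermHom_le_normalizer_closure_neg (M : Type*) [Monoid M] [HasDistribNeg M] :
    (MulAction.toPermHom Mˣ M).range ≤ normalizer (closure {Equiv.neg M} : Set (Perm M)) := by
  rw [le_normalizer_closure_iff]
  rintro _ ⟨u, rfl⟩ _ rfl
  convert mem_closure_singleton_self (Equiv.neg M) using 1
  ext x
  simp [Perm.mul_apply, Units.smul_def]

theorem mem_closure_addRight_one_iff {n : ℕ} {g : Perm (ZMod n)} :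
    g ∈ closure {Equiv.addRight (1 : ZMod n)} ↔ ∃ a, Equiv.addRight a = g := by
  simp only [mem_closure_singleton, zsmul_addRight, zsmul_one]
  exact (ZMod.intCast_surjective.exists (p := fun a => Equiv.addRight a = g)).symm

theorem exists_map_add_one_of_mem_normalizer {n : ℕ} {σ : Perm (ZMod n)}
    (h : σ ∈ normalizer (closure {Equiv.addRight (1 : ZMod n)} : Set (Perm (ZMod n)))) :
    ∃ c, ∀ x, σ (x + 1) = σ x + c := by
  obtain ⟨c, hc⟩ := mem_closure_addRight_one_iff.mp ((h _).mp (mem_closure_singleton_self _))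
  exact ⟨c, fun x => by simpa using congr($hc (σ x)).symm⟩

theorem range_toPermHom_le_normalizer_closure_addRight_one (n : ℕ) :
    (MulAction.toPermHom (ZMod n)ˣ (ZMod n)).range ≤
      normalizer (closure {Equiv.addRight (1 : ZMod n)} : Set (Perm (ZMod n))) := by
  rw [le_normalizer_closure_iff]
  rintro _ ⟨u, rfl⟩ _ rfl
  refine mem_closure_addRight_one_iff.mpr ⟨u, ?_⟩
  ext x
  simp [Perm.mul_apply, Units.smul_def]

theorem exists_unit_of_map_add_one {n : ℕ} {σ : Perm (ZMod n)} {c : ZMod n}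
    (hc : ∀ x, σ (x + 1) = σ x + c) (h0 : σ 0 = 0) : ∃ u : (ZMod n)ˣ, ∀ x, σ x = u * x := by
  have hlin (x : ZMod n) : σ x = c * x := by
    simpa [h0] using ZMod.map_eq_mul_add_of_map_add_one hc x
  obtain ⟨y, hy⟩ := σ.surjective 1
  exact ⟨(IsUnit.of_mul_eq_one y (by rw [← hlin, hy])).unit, hlin⟩

end Equiv.Perm

/-- For an odd prime `p`, a permutation `σ` of `ZMod p` normalizes both the subgroup
generated by the translation `x ↦ x + 1` and the subgroup generated by the negation
`x ↦ -x` iff `σ` is multiplication by a unit. -/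
theorem stmt19 {p : ℕ} (hp : p.Prime) (hodd : Odd p)
    (σ : Equiv.Perm (ZMod p)) :
    (σ ∈ Subgroup.normalizer ((Subgroup.closure {(Equiv.addRight (1 : ZMod p) : Equiv.Perm (ZMod p))} : Subgroup (Equiv.Perm (ZMod p))) : Set (Equiv.Perm (ZMod p)))
      ∧ σ ∈ Subgroup.normalizer ((Subgroup.closure {(Equiv.neg (ZMod p) : Equiv.Perm (ZMod p))} : Subgroup (Equiv.Perm (ZMod p))) : Set (Equiv.Perm (ZMod p))))
    ↔ ∃ u : (ZMod p)ˣ, ∀ x : ZMod p, σ x = (u : ZMod p) * x := by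
  have : Fact (1 < p) := ⟨hp.one_lt⟩
  have hneg : Equiv.neg (ZMod p) ≠ 1 := fun h =>
    one_ne_zero (ZMod.eq_zero_of_neg_eq_self hodd congr($h 1))
  constructor
  · rintro ⟨hT, hR⟩
    obtain ⟨c, hc⟩ := Perm.exists_map_add_one_of_mem_normalizer hT
    have h0 : σ 0 = 0 := ZMod.eq_zero_of_neg_eq_self hodd <| by
      simpa using (Perm.map_neg_of_mem_normalizer hneg hR 0).symm
    exact Perm.exists_unit_of_map_add_one hc h0
  · rintro ⟨u, hu⟩
    have hσ : σ ∈ (MulAction.toPermHom (ZMod p)ˣ (ZMod p)).range :=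
      ⟨u, Equiv.ext fun x => (hu x).symm⟩
    exact ⟨Perm.range_toPermHom_le_normalizer_closure_addRight_one p hσ,
      Perm.range_toPermHom_le_normalizer_closure_neg _ hσ⟩
end
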